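/- Fix c₁, c₂ ∈ ℂ with c₂ ≠ 0. Let g, v, G, V ∈ C∞₂π(ℝ²,ℂ) satisfy G_x = g_y, V_x = v_y and ∫₀^{2π} G(x,y) dx = ∫₀^{2π} V(x,y) dx = 0 for every y. Then: (i) for all a, b, A, B ∈ C∞₂π(ℝ²,ℂ) with A_x = a_y, B_x = b_y, ∫₀^{2π} A dx = ∫₀^{2π} B dx = 0, one has d/dε|_{ε=0} ∫₀^{2π}∫₀^{2π} (g+εa)·( (V+εB) − (1/2)·(G+εA) + (c₁/(2c₂))·(g+εa)_{xx} ) dx dy = ∫₀^{2π}∫₀^{2π} [ b·G + a·( V − G + (c₁/c₂)·g_{xx} ) ] dx dy, i.e. the variational gradient of H(g,v) = ∫∫ g·( ∂_x^{−1}v_y − (1/2)·∂_x^{−1}g_y + (c₁/(2c₂))·g_{xx} ) dx dy is (δH/δv, δH/δg) = ( G , V − G + (c₁/c₂)·g_{xx} ); (ii) the corresponding Euler vector field is âd*_{(G, V−G+(c₁/c₂)g_{xx})}(g,v) = ( G·g_x − g_y·g + c₂·G_y , 2·v·g_y − v_y·g + v_x·G − 2·g_x·V + g_y·g + 2·g_x·G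 − (c₁/c₂)·( g·g_{xxx} + 2·g_x·g_{xx} ) + 2·c₁·g_{xxy} + c₂·(V_y − G_y) ). In particular the first equation of this Euler system is the integrable equation g_t = g_x·∂_x^{−1}g_y − g_y·g + c₂·∂_x^{−1}g_{yy} (equation (6) of the paper, a dispersionless BKP-type equation). -/

import Mathlib

open Real intervalIntegral
open scoped ContDiff

noncomputable section

/-- Functions on `ℝ²` (representing functions on the 2-torus `S¹ × S¹`). -/
abbrev F2 : Type := ℝ × ℝ → ℂ

/-- `C∞₂π(ℝ²,ℂ)`: smooth functions `ℝ² → ℂ` which are `2π`-periodic in each variable. -/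
def SmoothPer2 (f : F2) : Prop :=
  ContDiff ℝ ∞ f ∧ (∀ p : ℝ × ℝ, f (p.1 + 2 * π, p.2) = f p)
    ∧ (∀ p : ℝ × ℝ, f (p.1, p.2 + 2 * π) = f p)

/-- Partial derivative in the first variable `x`. -/
def pdx (f : F2) : F2 := fun p => deriv (fun t => f (t, p.2)) p.1

/-- Partial derivative in the second variable `y`. -/
def pdy (f : F2) : F2 := fun p => deriv (fun t => f (p.1, t)) p.2

/-- Double integral `∫₀^{2π}∫₀^{2π} f dx dy` over the torus. -/
def integ2 (f : F2) : ℂ := ∫ y in (0:ℝ)..(2 * π), ∫ x in (0:ℝ)..(2 * π), f (x, y)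

/-- Membership in the looped cotangent Virasoro algebra `g̃`: a pair `(f,u)` of
functions in `C∞₂π(ℝ²,ℂ)`, `f` representing the loop of vector fields `f(x,y)·∂/∂x`
and `u` the loop of quadratic differentials `u(x,y)·dx²`. -/
def MemG (a : F2 × F2) : Prop := SmoothPer2 a.1 ∧ SmoothPer2 a.2

/-- The Lie bracket of the looped cotangent Virasoro algebra `g̃ = L(Vect(S¹) ⋉ F₂)`:
`[(f,u),(g,v)] = (f·g_x − f_x·g, f·v_x + 2·f_x·v − g·u_x − 2·g_x·u)`. -/
def gBracket (a b : F2 × F2) : F2 × F2 :=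
  (fun p => a.1 p * pdx b.1 p - pdx a.1 p * b.1 p,
   fun p => a.1 p * pdx b.2 p + 2 * pdx a.1 p * b.2 p
     - b.1 p * pdx a.2 p - 2 * pdx b.1 p * a.2 p)

/-- The coadjoint action of the centrally extended algebra `ĝ` with central charges
`(c₁,c₂)`: `âd*_{(f,u)}(g,v) = (f·g_x − f_x·g + c₂·f_y,
f·v_x + 2·f_x·v − u_x·g − 2·u·g_x + c₁·f_{xxx} + c₂·u_y)`. -/
def hatAd (c₁ c₂ : ℂ) (f u g v : F2) : F2 × F2 :=
  (fun p => f p * pdx g p - pdx f p * g p + c₂ * pdy f p,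
   fun p => f p * pdx v p + 2 * pdx f p * v p - pdx u p * g p - 2 * u p * pdx g p
     + c₁ * pdx (pdx (pdx f)) p + c₂ * pdy u p)


/-!
Both parts rest on symmetries of the pairing `∫∫ f·h` on the torus. `∂ₓ²` is symmetric: integrate
by parts twice in `x`. So is `∂ₓ⁻¹∂_y`, i.e. `∫∫ g·B = ∫∫ b·G` when `G = ∂ₓ⁻¹g_y`, `B = ∂ₓ⁻¹b_y`.
Since `B_x = b_y`, the equations `χ_y = B`, `χ_x = b − c` have a solution `χ`; a suitable constant
`c` makes it periodic in `x`, and `∫₀^{2π} B dx = 0` forces `∫₀^{2π} B dy = 0`, which makes it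
periodic in `y`. Integrating by parts first in `y`, then in `x`, turns `∫∫ g·χ_y` into
`∫∫ G·(b − c)`, and the constant drops out since `G` has zero `x`-mean. With these symmetries the
`ε`-derivative of the quadratic Hamiltonian is the stated gradient. The Euler field is a pointwise
computation using `G_x = g_y`, `V_x = v_y` and the symmetry of mixed partials.
-/

open MeasureTheory Set

section PartialDerivatives

variable {f : F2}

lemma hasDerivAt_pdx {x y : ℝ} (hf : DifferentiableAt ℝ f (x, y)) :
    HasDerivAt (fun t => f (t, y)) (pdx f (x, y)) x :=
  (hf.comp x (differentiableAt_id.prodMk (differentiableAt_const y))).hasDerivAt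

lemma hasDerivAt_pdy {x y : ℝ} (hf : DifferentiableAt ℝ f (x, y)) :
    HasDerivAt (fun t => f (x, t)) (pdy f (x, y)) y :=
  (hf.comp y ((differentiableAt_const x).prodMk differentiableAt_id)).hasDerivAt

lemma pdx_eq_fderiv (hf : Differentiable ℝ f) : pdx f = fun p => fderiv ℝ f p (1, 0) :=
  funext fun p => ((hf p).hasFDerivAt.comp_hasDerivAt p.1
    ((hasDerivAt_id p.1).prodMk (hasDerivAt_const p.1 p.2))).deriv

lemma pdy_eq_fderiv (hf : Differentiable ℝ f) : pdy f = fun p => fderiv ℝ f p (0, 1) :=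
  funext fun p => ((hf p).hasFDerivAt.comp_hasDerivAt p.2
    ((hasDerivAt_const p.2 p.1).prodMk (hasDerivAt_id p.2))).deriv

lemma contDiff_pdx (hf : ContDiff ℝ ∞ f) : ContDiff ℝ ∞ (pdx f) := by
  rw [pdx_eq_fderiv (hf.differentiable (by simp))]
  exact (hf.fderiv_right le_rfl).clm_apply contDiff_const

lemma contDiff_pdy (hf : ContDiff ℝ ∞ f) : ContDiff ℝ ∞ (pdy f) := by
  rw [pdy_eq_fderiv (hf.differentiable (by simp))]
  exact (hf.fderiv_right le_rfl).clm_apply contDiff_const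

lemma pdx_pdy_comm (hf : ContDiff ℝ ∞ f) : pdx (pdy f) = pdy (pdx f) := by
  have hd : Differentiable ℝ (fderiv ℝ f) :=
    (hf.fderiv_right (m := ∞) le_rfl).differentiable (by simp)
  have hd' (v : ℝ × ℝ) : Differentiable ℝ (fun q => fderiv ℝ f q v) :=
    fun q => (hd q).clm_apply (differentiableAt_const v)
  rw [pdy_eq_fderiv (hf.differentiable (by simp)), pdx_eq_fderiv (hf.differentiable (by simp)),
    pdx_eq_fderiv (hd' _), pdy_eq_fderiv (hd' _)]
  funext p
  simp only [fderiv_clm_apply (hd p) (differentiableAt_const _), fderiv_fun_const, Pi.zero_apply,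
    ContinuousLinearMap.comp_zero, zero_add, ContinuousLinearMap.flip_apply]
  exact hf.contDiffAt.isSymmSndFDerivAt
    (by rw [minSmoothness_of_isRCLikeNormedField]; exact WithTop.coe_le_coe.2 le_top) _ _

lemma pdx_add_const_mul {a : F2} (hf : Differentiable ℝ f) (ha : Differentiable ℝ a) (c : ℂ) :
    pdx (fun q => f q + c * a q) = fun q => pdx f q + c * pdx a q :=
  funext fun _ => ((hasDerivAt_pdx (hf _)).add ((hasDerivAt_pdx (ha _)).const_mul c)).deriv

lemma pdx_sub_add_const_mul {h k : F2} (hf : Differentiable ℝ f) (hh : Differentiable ℝ h)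
    (hk : Differentiable ℝ k) (c : ℂ) (p : ℝ × ℝ) :
    pdx (fun q => f q - h q + c * k q) p = pdx f p - pdx h p + c * pdx k p :=
  (((hasDerivAt_pdx (hf _)).sub (hasDerivAt_pdx (hh _))).add
    ((hasDerivAt_pdx (hk _)).const_mul c)).deriv

lemma pdy_sub_add_const_mul {h k : F2} (hf : Differentiable ℝ f) (hh : Differentiable ℝ h)
    (hk : Differentiable ℝ k) (c : ℂ) (p : ℝ × ℝ) :
    pdy (fun q => f q - h q + c * k q) p = pdy f p - pdy h p + c * pdy k p :=
  (((hasDerivAt_pdy (hf _)).sub (hasDerivAt_pdy (hh _))).add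
    ((hasDerivAt_pdy (hk _)).const_mul c)).deriv

lemma continuous_slice_x (hf : Continuous f) (y : ℝ) : Continuous fun x => f (x, y) :=
  hf.comp (Continuous.prodMk_left y)

lemma continuous_slice_y (hf : Continuous f) (x : ℝ) : Continuous fun y => f (x, y) :=
  hf.comp (Continuous.prodMk_right x)

end PartialDerivatives

namespace SmoothPer2

variable {f : F2}

lemma continuous (hf : SmoothPer2 f) : Continuous f := hf.1.continuous

lemma differentiable (hf : SmoothPer2 f) : Differentiable ℝ f := hf.1.differentiable (by simp)

lemma periodic_x (hf : SmoothPer2 f) (y : ℝ) : f (2 * π, y) = f (0, y) := by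
  simpa using hf.2.1 (0, y)

lemma periodic_y (hf : SmoothPer2 f) (x : ℝ) : f (x, 2 * π) = f (x, 0) := by
  simpa using hf.2.2 (x, 0)

protected lemma pdx (hf : SmoothPer2 f) : SmoothPer2 (pdx f) := by
  refine ⟨contDiff_pdx hf.1, fun p => ?_, fun p => ?_⟩
  · show deriv (fun t => f (t, p.2)) (p.1 + 2 * π) = deriv (fun t => f (t, p.2)) p.1
    rw [← deriv_comp_add_const]
    exact congrArg (deriv · p.1) (funext fun t => hf.2.1 (t, p.2))
  · show deriv (fun t => f (t, p.2 + 2 * π)) p.1 = deriv (fun t => f (t, p.2)) p.1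
    exact congrArg (deriv · p.1) (funext fun t => hf.2.2 (t, p.2))

end SmoothPer2

section TorusIntegral

lemma intervalIntegral_swap_of_continuous {F : ℝ → ℝ → ℂ} (hF : Continuous F.uncurry)
    (a b c d : ℝ) :
    ∫ x in a..b, ∫ y in c..d, F x y = ∫ y in c..d, ∫ x in a..b, F x y :=
  intervalIntegral_intervalIntegral_swap
    ((hF.continuousOn.integrableOn_compact (isCompact_uIcc.prod isCompact_uIcc)).mono_set
      (prod_mono uIoc_subset_uIcc uIoc_subset_uIcc))

-- Typed `ℝ × ℝ → ℂ` rather than `F2`: `fun_prop` does not unfold the abbreviation.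
variable {f h : ℝ × ℝ → ℂ}

lemma integ2_swap (hf : Continuous f) : integ2 (fun p => f p.swap) = integ2 f :=
  intervalIntegral_swap_of_continuous (F := fun y x => f (y, x)) (by fun_prop) _ _ _ _

lemma integ2_congr (hfh : ∀ p, f p = h p) : integ2 f = integ2 h := by
  simp only [integ2, hfh]

lemma integ2_const_mul (c : ℂ) : integ2 (fun p => c * f p) = c * integ2 f := by
  simp only [integ2, intervalIntegral.integral_const_mul]

lemma continuous_intervalIntegral_slice (hf : Continuous f) :
    Continuous fun y => ∫ x in (0:ℝ)..(2 * π), f (x, y) :=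
  intervalIntegral.continuous_parametric_intervalIntegral_of_continuous' (by fun_prop) _ _

lemma integ2_add (hf : Continuous f) (hh : Continuous h) :
    integ2 (fun p => f p + h p) = integ2 f + integ2 h := by
  simp only [integ2]
  rw [← intervalIntegral.integral_add
    ((continuous_intervalIntegral_slice hf).intervalIntegrable _ _)
    ((continuous_intervalIntegral_slice hh).intervalIntegrable _ _)]
  refine intervalIntegral.integral_congr fun y _ => intervalIntegral.integral_add ?_ ?_ <;>
    exact Continuous.intervalIntegrable (by fun_prop) _ _

lemma integ2_sub (hf : Continuous f) (hh : Continuous h) :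
    integ2 (fun p => f p - h p) = integ2 f - integ2 h := by
  simp only [sub_eq_add_neg, ← neg_one_mul (h _), ← neg_one_mul (integ2 h)]
  rw [integ2_add hf (by fun_prop), integ2_const_mul]

end TorusIntegral

section IntegrationByParts

variable {u u' w w' : ℝ × ℝ → ℂ}

lemma integ2_mul_deriv_x (hu : ∀ x y, HasDerivAt (fun t => u (t, y)) (u' (x, y)) x)
    (hw : ∀ x y, HasDerivAt (fun t => w (t, y)) (w' (x, y)) x)
    (hu' : Continuous u') (hw' : Continuous w')
    (hper : ∀ y, u (2 * π, y) * w (2 * π, y) = u (0, y) * w (0, y)) :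
    integ2 (fun p => u p * w' p) = -integ2 (fun p => u' p * w p) := by
  simp only [integ2]
  rw [← intervalIntegral.integral_neg]
  refine intervalIntegral.integral_congr fun y _ => ?_
  rw [intervalIntegral.integral_mul_deriv_eq_deriv_mul (fun x _ => hu x y) (fun x _ => hw x y)
    (Continuous.intervalIntegrable (by fun_prop) _ _)
    (Continuous.intervalIntegrable (by fun_prop) _ _), hper y, sub_self, zero_sub]

lemma integ2_mul_deriv_y (hu : ∀ x y, HasDerivAt (fun t => u (x, t)) (u' (x, y)) y)
    (hw : ∀ x y, HasDerivAt (fun t => w (x, t)) (w' (x, y)) y)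
    (hcu : Continuous u) (hcw : Continuous w) (hu' : Continuous u') (hw' : Continuous w')
    (hper : ∀ x, u (x, 2 * π) * w (x, 2 * π) = u (x, 0) * w (x, 0)) :
    integ2 (fun p => u p * w' p) = -integ2 (fun p => u' p * w p) := by
  rw [← integ2_swap (by fun_prop), ← integ2_swap (f := fun p => u' p * w p) (by fun_prop)]
  exact integ2_mul_deriv_x (u := fun p => u p.swap) (w := fun p => w p.swap)
    (fun x y => hu y x) (fun x y => hw y x) (by fun_prop) (by fun_prop) hper

lemma integ2_mul_pdx_pdx_comm {g a : F2} (hg : SmoothPer2 g) (ha : SmoothPer2 a) :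
    integ2 (fun p => g p * pdx (pdx a) p) = integ2 (fun p => a p * pdx (pdx g) p) := by
  have hgx := hg.pdx
  have hax := ha.pdx
  calc integ2 (fun p => g p * pdx (pdx a) p)
      = -integ2 (fun p => pdx g p * pdx a p) :=
        integ2_mul_deriv_x (fun _ _ => hasDerivAt_pdx (hg.differentiable _))
          (fun _ _ => hasDerivAt_pdx (hax.differentiable _)) hgx.continuous hax.pdx.continuous
          fun y => by rw [hg.periodic_x, hax.periodic_x]
    _ = integ2 (fun p => pdx (pdx g) p * a p) := by
        rw [integ2_mul_deriv_x (fun _ _ => hasDerivAt_pdx (hgx.differentiable _))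
          (fun _ _ => hasDerivAt_pdx (ha.differentiable _)) hgx.pdx.continuous hax.continuous
          fun y => by rw [hgx.periodic_x, ha.periodic_x], neg_neg]
    _ = integ2 (fun p => a p * pdx (pdx g) p) := integ2_congr fun p => mul_comm _ _

end IntegrationByParts

section Potential

/-- `B = ∂ₓ⁻¹ b_y`: the `x`-antiderivative of `b_y` with zero mean on every circle `y = const`. -/
def IsDxInvDy (B b : F2) : Prop :=
  SmoothPer2 B ∧ (∀ p, pdx B p = pdy b p) ∧ ∀ y : ℝ, ∫ x in (0:ℝ)..(2 * π), B (x, y) = 0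

variable {b B : F2}

lemma integral_sub_integral_eq_of_pdx_eq_pdy (hb : ContDiff ℝ ∞ b) (hB : ContDiff ℝ ∞ B)
    (hBx : ∀ p, pdx B p = pdy b p) (X Y : ℝ) :
    (∫ t in (0:ℝ)..Y, B (X, t)) - ∫ t in (0:ℝ)..Y, B (0, t)
      = ∫ s in (0:ℝ)..X, (b (s, Y) - b (s, 0)) := by
  have hBc := hB.continuous
  have hbyc := (contDiff_pdy hb).continuous
  calc (∫ t in (0:ℝ)..Y, B (X, t)) - ∫ t in (0:ℝ)..Y, B (0, t)
      = ∫ t in (0:ℝ)..Y, ∫ s in (0:ℝ)..X, pdy b (s, t) := by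
        rw [← intervalIntegral.integral_sub ((continuous_slice_y hBc X).intervalIntegrable _ _)
          ((continuous_slice_y hBc 0).intervalIntegrable _ _)]
        refine intervalIntegral.integral_congr fun t _ => ?_
        simp only [← hBx]
        exact (intervalIntegral.integral_eq_sub_of_hasDerivAt
          (fun s _ => hasDerivAt_pdx ((hB.differentiable (by simp)) (s, t)))
          ((continuous_slice_x (contDiff_pdx hB).continuous t).intervalIntegrable _ _)).symm
    _ = ∫ s in (0:ℝ)..X, ∫ t in (0:ℝ)..Y, pdy b (s, t) :=
        intervalIntegral_swap_of_continuous (F := fun t s => pdy b (s, t))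
          (hbyc.comp continuous_swap) _ _ _ _
    _ = ∫ s in (0:ℝ)..X, (b (s, Y) - b (s, 0)) :=
        intervalIntegral.integral_congr fun s _ => intervalIntegral.integral_eq_sub_of_hasDerivAt
          (fun t _ => hasDerivAt_pdy ((hb.differentiable (by simp)) (s, t)))
          ((continuous_slice_y hbyc s).intervalIntegrable _ _)

lemma integral_slice_y_eq_zero (hb : SmoothPer2 b) (hB : IsDxInvDy B b) (x : ℝ) :
    ∫ t in (0:ℝ)..(2 * π), B (x, t) = 0 := by
  have hconst (x : ℝ) :
      ∫ t in (0:ℝ)..(2 * π), B (x, t) = ∫ t in (0:ℝ)..(2 * π), B (0, t) := by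
    rw [← sub_eq_zero, integral_sub_integral_eq_of_pdx_eq_pdy hb.1 hB.1.1 hB.2.1]
    simp [hb.periodic_y]
  have htotal : ∫ x in (0:ℝ)..(2 * π), ∫ t in (0:ℝ)..(2 * π), B (x, t) = 0 := by
    rw [intervalIntegral_swap_of_continuous (F := fun x t => B (x, t)) hB.1.continuous]
    simp [hB.2.2]
  simp only [hconst, intervalIntegral.integral_const, smul_eq_zero, sub_zero] at htotal
  rw [hconst]
  exact htotal.resolve_left (by positivity)

/-- Chosen so that `potential b B` is periodic in `x`. -/
def potentialConst (b : F2) : ℂ := (∫ s in (0:ℝ)..(2 * π), b (s, 0)) / (2 * π : ℝ)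

def potential (b B : F2) : F2 := fun p =>
  (∫ s in (0:ℝ)..p.1, b (s, 0)) - potentialConst b * p.1 + ∫ t in (0:ℝ)..p.2, B (p.1, t)

lemma potential_eq (hb : ContDiff ℝ ∞ b) (hB : ContDiff ℝ ∞ B) (hBx : ∀ p, pdx B p = pdy b p)
    (x y : ℝ) :
    potential b B (x, y)
      = (∫ s in (0:ℝ)..x, b (s, y)) - potentialConst b * x + ∫ t in (0:ℝ)..y, B (0, t) := by
  have hrect := integral_sub_integral_eq_of_pdx_eq_pdy hb hB hBx x y
  rw [intervalIntegral.integral_sub ((continuous_slice_x hb.continuous y).intervalIntegrable _ _)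
    ((continuous_slice_x hb.continuous 0).intervalIntegrable _ _)] at hrect
  simp only [potential]
  linear_combination hrect

lemma continuous_potential (hb : Continuous b) (hB : Continuous B) :
    Continuous (potential b B) :=
  ((intervalIntegral.continuous_parametric_intervalIntegral_of_continuous
      (f := fun (_ : ℝ × ℝ) s => b (s, 0)) (hb.comp (continuous_snd.prodMk continuous_const))
      continuous_fst).sub
    (continuous_const.mul (Complex.continuous_ofReal.comp continuous_fst))).add
  (intervalIntegral.continuous_parametric_intervalIntegral_of_continuous
    (f := fun (p : ℝ × ℝ) t => B (p.1, t))
    (hB.comp ((continuous_fst.comp continuous_fst).prodMk continuous_snd)) continuous_snd)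

lemma hasDerivAt_potential_x (hb : ContDiff ℝ ∞ b) (hB : ContDiff ℝ ∞ B)
    (hBx : ∀ p, pdx B p = pdy b p) (x y : ℝ) :
    HasDerivAt (fun t => potential b B (t, y)) (b (x, y) - potentialConst b) x := by
  simp only [potential_eq hb hB hBx]
  have hlin : HasDerivAt (fun t : ℝ => potentialConst b * t) (potentialConst b) x := by
    simpa using (Complex.ofRealCLM.hasDerivAt (x := x)).const_mul (potentialConst b)
  exact (((continuous_slice_x hb.continuous y).integral_hasStrictDerivAt 0 x).hasDerivAt.sub
    hlin).add_const _

lemma hasDerivAt_potential_y (hB : Continuous B) (x y : ℝ) :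
    HasDerivAt (fun t => potential b B (x, t)) (B (x, y)) y :=
  ((continuous_slice_y hB x).integral_hasStrictDerivAt 0 y).hasDerivAt.const_add
    ((∫ s in (0:ℝ)..x, b (s, 0)) - potentialConst b * x)

lemma potential_periodic_x (hB : SmoothPer2 B) (y : ℝ) :
    potential b B (2 * π, y) = potential b B (0, y) := by
  have hc : potentialConst b * (2 * π : ℝ) = ∫ s in (0:ℝ)..(2 * π), b (s, 0) :=
    div_mul_cancel₀ _ (Complex.ofReal_ne_zero.2 Real.two_pi_pos.ne')
  simp only [potential, hc, hB.periodic_x, intervalIntegral.integral_same, Complex.ofReal_zero]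
  ring

lemma potential_periodic_y (hb : SmoothPer2 b) (hB : IsDxInvDy B b) (x : ℝ) :
    potential b B (x, 2 * π) = potential b B (x, 0) := by
  simp [potential, integral_slice_y_eq_zero hb hB x]

end Potential

lemma integ2_eq_zero_of_isDxInvDy {G g : F2} (hG : IsDxInvDy G g) : integ2 G = 0 := by
  simp [integ2, hG.2.2]

theorem integ2_mul_isDxInvDy_comm {g G b B : F2} (hg : SmoothPer2 g) (hG : IsDxInvDy G g)
    (hb : SmoothPer2 b) (hB : IsDxInvDy B b) :
    integ2 (fun p => g p * B p) = integ2 (fun p => b p * G p) := by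
  have hB' := hB.1
  have hG' := hG.1
  calc integ2 (fun p => g p * B p)
      = -integ2 (fun p => pdy g p * potential b B p) :=
        integ2_mul_deriv_y (fun _ _ => hasDerivAt_pdy (hg.differentiable _))
          (hasDerivAt_potential_y hB'.continuous) hg.continuous
          (continuous_potential hb.continuous hB'.continuous)
          (contDiff_pdy hg.1).continuous hB'.continuous
          fun x => by rw [hg.periodic_y, potential_periodic_y hb hB]
    _ = -integ2 (fun p => pdx G p * potential b B p) := by simp only [hG.2.1]
    _ = integ2 (fun p => G p * (b p - potentialConst b)) := by
        rw [integ2_mul_deriv_x (w' := fun p => b p - potentialConst b)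
          (fun _ _ => hasDerivAt_pdx (hG'.differentiable _))
          (hasDerivAt_potential_x hb.1 hB'.1 hB.2.1) hG'.pdx.continuous
          (hb.continuous.sub continuous_const)
          fun y => by rw [hG'.periodic_x, potential_periodic_x hB']]
    _ = integ2 (fun p => b p * G p) - potentialConst b * integ2 G := by
        rw [← integ2_const_mul, ← integ2_sub (f := fun p => b p * G p)
          (h := fun p => potentialConst b * G p)
          (hb.continuous.mul hG'.continuous) (continuous_const.mul hG'.continuous)]
        exact integ2_congr fun p => by ring
    _ = integ2 (fun p => b p * G p) := by
        rw [integ2_eq_zero_of_isDxInvDy hG, mul_zero, sub_zero]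

lemma deriv_integ2_mul_add_mul {g a W R : ℝ × ℝ → ℂ} (hg : Continuous g) (ha : Continuous a)
    (hW : Continuous W) (hR : Continuous R) :
    deriv (fun ε : ℝ => integ2 (fun p => (g p + ε * a p) * (W p + ε * R p))) 0
      = integ2 (fun p => a p * W p + g p * R p) := by
  have hexpand : (fun ε : ℝ => integ2 (fun p => (g p + ε * a p) * (W p + ε * R p)))
      = fun ε : ℝ => integ2 (fun p => g p * W p) + ε * integ2 (fun p => a p * W p + g p * R p)
          + ε * ε * integ2 (fun p => a p * R p) := by
    funext ε
    rw [← integ2_const_mul, ← integ2_const_mul, ← integ2_add (by fun_prop) (by fun_prop),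
      ← integ2_add (by fun_prop) (by fun_prop)]
    exact integ2_congr fun p => by ring
  have hε : HasDerivAt (fun ε : ℝ => (ε : ℂ)) 1 0 := (hasDerivAt_id (0:ℝ)).ofReal_comp
  rw [hexpand, (((hε.mul_const _).const_add _).fun_add ((hε.fun_mul hε).mul_const _)).deriv]
  simp

lemma integ2_first_variation (k : ℂ) {g G V a b A B : F2} (hg : SmoothPer2 g)
    (hG : IsDxInvDy G g) (hV : SmoothPer2 V) (ha : SmoothPer2 a) (hb : SmoothPer2 b)
    (hA : IsDxInvDy A a) (hB : IsDxInvDy B b) :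
    integ2 (fun p => a p * (V p - 1/2 * G p + k * pdx (pdx g) p)
        + g p * (B p - 1/2 * A p + k * pdx (pdx a) p))
      = integ2 (fun p => b p * G p + a p * (V p - G p + 2 * k * pdx (pdx g) p)) := by
  have hcg := hg.continuous
  have hca := ha.continuous
  have hcb := hb.continuous
  have hcG := hG.1.continuous
  have hcA := hA.1.continuous
  have hcB := hB.1.continuous
  have hcV := hV.continuous
  have hcgxx := hg.pdx.pdx.continuous
  have hcaxx := ha.pdx.pdx.continuous
  rw [integ2_congr (h := fun p => a p * V p - 1/2 * (a p * G p) + k * (a p * pdx (pdx g) p)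
      + g p * B p - 1/2 * (g p * A p) + k * (g p * pdx (pdx a) p)) fun p => by ring,
    integ2_congr (f := fun p => b p * G p + a p * (V p - G p + 2 * k * pdx (pdx g) p))
      (h := fun p => b p * G p + a p * V p - a p * G p
      + 2 * k * (a p * pdx (pdx g) p)) fun p => by ring]
  -- `apply_rules` rather than `fun_prop`, which fails on functions of type `F2`.
  simp (disch := apply_rules [Continuous.add, Continuous.sub, Continuous.mul, continuous_const])
    only [integ2_add, integ2_sub, integ2_const_mul]
  rw [integ2_mul_isDxInvDy_comm hg hG hb hB, integ2_mul_isDxInvDy_comm hg hG ha hA,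
    integ2_mul_pdx_pdx_comm hg ha]
  ring

theorem deriv_hamiltonian (c₁ c₂ : ℂ) {g G V a b A B : F2} (hg : SmoothPer2 g)
    (hG : IsDxInvDy G g) (hV : SmoothPer2 V) (ha : SmoothPer2 a) (hb : SmoothPer2 b)
    (hA : IsDxInvDy A a) (hB : IsDxInvDy B b) :
    deriv (fun ε : ℝ => integ2 (fun p =>
        (g p + (ε : ℂ) * a p) * ((V p + (ε : ℂ) * B p) - (1/2 : ℂ) * (G p + (ε : ℂ) * A p)
          + (c₁ / (2 * c₂)) * pdx (pdx (fun q => g q + (ε : ℂ) * a q)) p))) 0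
      = integ2 (fun p => b p * G p + a p * (V p - G p + (c₁ / c₂) * pdx (pdx g) p)) := by
  set k := c₁ / (2 * c₂)
  have hgx := hg.pdx
  have hax := ha.pdx
  have hperturb : (fun ε : ℝ => integ2 (fun p =>
        (g p + (ε : ℂ) * a p) * ((V p + (ε : ℂ) * B p) - (1/2 : ℂ) * (G p + (ε : ℂ) * A p)
          + k * pdx (pdx (fun q => g q + (ε : ℂ) * a q)) p)))
      = fun ε : ℝ => integ2 (fun p => (g p + ε * a p) * ((V p - 1/2 * G p + k * pdx (pdx g) p)
          + ε * (B p - 1/2 * A p + k * pdx (pdx a) p))) := by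
    funext ε
    rw [pdx_add_const_mul hg.differentiable ha.differentiable,
      pdx_add_const_mul hgx.differentiable hax.differentiable]
    exact integ2_congr fun p => by ring
  rw [hperturb, deriv_integ2_mul_add_mul hg.continuous ha.continuous
    (W := fun p => V p - 1/2 * G p + k * pdx (pdx g) p)
    (R := fun p => B p - 1/2 * A p + k * pdx (pdx a) p)
    ((hV.continuous.sub (continuous_const.mul hG.1.continuous)).add
      (continuous_const.mul hgx.pdx.continuous))
    ((hB.1.continuous.sub (continuous_const.mul hA.1.continuous)).add
      (continuous_const.mul hax.pdx.continuous)),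
    integ2_first_variation k hg hG hV ha hb hA hB, show c₁ / c₂ = 2 * k by ring]

theorem biHamiltonian_BKP_euler_equation_general (c₁ c₂ : ℂ) (hc₂ : c₂ ≠ 0) (g v G V : F2)
    (hg : SmoothPer2 g) (hG : SmoothPer2 G) (hV : SmoothPer2 V)
    (hGx : ∀ p, pdx G p = pdy g p) (hVx : ∀ p, pdx V p = pdy v p)
    (hG0 : ∀ y : ℝ, (∫ x in (0:ℝ)..(2 * π), G (x, y)) = 0) :
    (∀ a b A B : F2, SmoothPer2 a → SmoothPer2 b → SmoothPer2 A → SmoothPer2 B →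
      (∀ p, pdx A p = pdy a p) → (∀ p, pdx B p = pdy b p) →
      (∀ y : ℝ, (∫ x in (0:ℝ)..(2 * π), A (x, y)) = 0) →
      (∀ y : ℝ, (∫ x in (0:ℝ)..(2 * π), B (x, y)) = 0) →
      deriv (fun ε : ℝ => integ2 (fun p =>
          (g p + (ε : ℂ) * a p) * ((V p + (ε : ℂ) * B p) - (1/2 : ℂ) * (G p + (ε : ℂ) * A p)
            + (c₁ / (2 * c₂)) * pdx (pdx (fun q => g q + (ε : ℂ) * a q)) p))) 0
        = integ2 (fun p => b p * G p
            + a p * (V p - G p + (c₁ / c₂) * pdx (pdx g) p))) ∧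
    hatAd c₁ c₂ G (fun p => V p - G p + (c₁ / c₂) * pdx (pdx g) p) g v
      = (fun p => G p * pdx g p - pdy g p * g p + c₂ * pdy G p,
         fun p => 2 * v p * pdy g p - pdy v p * g p + pdx v p * G p - 2 * pdx g p * V p
            + pdy g p * g p + 2 * pdx g p * G p
            - (c₁ / c₂) * (g p * pdx (pdx (pdx g)) p + 2 * pdx g p * pdx (pdx g) p)
            + 2 * c₁ * pdx (pdx (pdy g)) p + c₂ * (pdy V p - pdy G p)) := by
  refine ⟨fun a b A B ha hb hA hB hAx hBx hA0 hB0 => deriv_hamiltonian c₁ c₂ hg ⟨hG, hGx, hG0⟩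
    hV ha hb ⟨hA, hAx, hA0⟩ ⟨hB, hBx, hB0⟩, ?_⟩
  have hGxxx : pdx (pdx (pdx G)) = pdx (pdx (pdy g)) := by rw [funext hGx]
  have hyxx : pdy (pdx (pdx g)) = pdx (pdx (pdy g)) := by
    rw [← pdx_pdy_comm hg.pdx.1, ← pdx_pdy_comm hg.1]
  ext p
  · simp only [hatAd, hGx]
  · simp only [hatAd, pdx_sub_add_const_mul hV.differentiable hG.differentiable
      hg.pdx.pdx.differentiable, pdy_sub_add_const_mul hV.differentiable hG.differentiable
      hg.pdx.pdx.differentiable, hGxxx, hyxx, hGx, hVx]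
    field_simp
    ring

/-- **The bi-Hamiltonian (BKP-type) Euler equation on `ĝ*`.** Assume `c₂ ≠ 0` and let
`G = ∂_x^{−1}g_y`, `V = ∂_x^{−1}v_y`. Then:
(i) the variational gradient of
`H(g,v) = ∫∫ g·(∂_x^{−1}v_y − (1/2)·∂_x^{−1}g_y + (c₁/(2c₂))·g_{xx}) dx dy` is
`(δH/δv, δH/δg) = (G, V − G + (c₁/c₂)·g_{xx})`, in the sense that for any variation
`(a,b)` with `A = ∂_x^{−1}a_y`, `B = ∂_x^{−1}b_y`, the derivative at `ε = 0` of the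
deformed Hamiltonian is `∫∫ [b·G + a·(V − G + (c₁/c₂)·g_{xx})]`;
(ii) the Euler vector field `âd*_{(G, V−G+(c₁/c₂)g_{xx})}(g,v)` is the stated pair; in
particular its first component is the integrable BKP-type equation
`g_t = g_x·∂_x^{−1}g_y − g_y·g + c₂·∂_x^{−1}g_{yy}` (equation (6) of the paper). -/
theorem biHamiltonian_BKP_euler_equation (c₁ c₂ : ℂ) (hc₂ : c₂ ≠ 0) (g v G V : F2)
    (hg : SmoothPer2 g) (hv : SmoothPer2 v) (hG : SmoothPer2 G) (hV : SmoothPer2 V)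
    (hGx : ∀ p, pdx G p = pdy g p) (hVx : ∀ p, pdx V p = pdy v p)
    (hG0 : ∀ y : ℝ, (∫ x in (0:ℝ)..(2 * π), G (x, y)) = 0)
    (hV0 : ∀ y : ℝ, (∫ x in (0:ℝ)..(2 * π), V (x, y)) = 0) :
    (∀ a b A B : F2, SmoothPer2 a → SmoothPer2 b → SmoothPer2 A → SmoothPer2 B →
      (∀ p, pdx A p = pdy a p) → (∀ p, pdx B p = pdy b p) →
      (∀ y : ℝ, (∫ x in (0:ℝ)..(2 * π), A (x, y)) = 0) →
      (∀ y : ℝ, (∫ x in (0:ℝ)..(2 * π), B (x, y)) = 0) →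
      deriv (fun ε : ℝ => integ2 (fun p =>
          (g p + (ε : ℂ) * a p) * ((V p + (ε : ℂ) * B p) - (1/2 : ℂ) * (G p + (ε : ℂ) * A p)
            + (c₁ / (2 * c₂)) * pdx (pdx (fun q => g q + (ε : ℂ) * a q)) p))) 0
        = integ2 (fun p => b p * G p
            + a p * (V p - G p + (c₁ / c₂) * pdx (pdx g) p))) ∧
    hatAd c₁ c₂ G (fun p => V p - G p + (c₁ / c₂) * pdx (pdx g) p) g v
      = (fun p => G p * pdx g p - pdy g p * g p + c₂ * pdy G p,
         fun p => 2 * v p * pdy g p - pdy v p * g p + pdx v p * G p - 2 * pdx g p * V p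
            + pdy g p * g p + 2 * pdx g p * G p
            - (c₁ / c₂) * (g p * pdx (pdx (pdx g)) p + 2 * pdx g p * pdx (pdx g) p)
            + 2 * c₁ * pdx (pdx (pdy g)) p + c₂ * (pdy V p - pdy G p)) :=
  biHamiltonian_BKP_euler_equation_general c₁ c₂ hc₂ g v G V hg hG hV hGx hVx hG0
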